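/- Let I ⊆ [n] with 1 < |I| < n−1 and k ∉ I, and write m = |I|. Then v_I = ∑_{S ⊆ I, |S|=2} v_S − (m−2)·Φ_n(∑_{i∈I} e_i) in ℝ^T. In particular, in Q_n = ℝ^T/im(Φ_n), v_I equals the sum of v_S over all 2-element subsets S of I. -/

import Mathlib

open Finset

noncomputable def Phi (n : ℕ) :
    (Fin n → ℝ) →ₗ[ℝ] ({S : Finset (Fin n) // S.card = 2} → ℝ) :=
  LinearMap.pi fun S => ∑ i ∈ S.1, LinearMap.proj i

def v (n : ℕ) (I : Finset (Fin n)) : {S : Finset (Fin n) // S.card = 2} → ℝ :=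
  fun S => if (I ∩ S.1).card = 1 then 1 else 0

/-!
Write `1_J = ∑ i ∈ J, e_i` and `w_J` for the indicator of the pairs `U ⊆ J`. Since `|J ∩ U| ∈ {0, 1, 2}`
for a pair `U`, and `|J ∩ U| = 2` exactly when `U ⊆ J`, every `v_J` equals `Φ(1_J) - 2 w_J`. Summing over
the pairs `S ⊆ I`, each `i ∈ I` lies in `m - 1` of them and each pair inside `I` is exactly one `S`, so
`∑ v_S = (m - 1) Φ(1_I) - 2 w_I = v_I + (m - 2) Φ(1_I)`.
-/

section

variable {ι M : Type*} [DecidableEq ι] [AddCommMonoid M]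

lemma sum_pi_single_apply (J : Finset ι) (c : M) (a : ι) :
    (∑ i ∈ J, Pi.single i c) a = if a ∈ J then c else 0 := by
  simp [Finset.sum_apply, Pi.single_apply]

lemma sum_powersetCard_sum_pi_single {r : ℕ} (hr : r ≠ 0) (I : Finset ι) (c : M) :
    ∑ S ∈ powersetCard r I, ∑ i ∈ S, Pi.single i c
      = (#I - 1).choose (r - 1) • ∑ i ∈ I, Pi.single i c := by
  ext a
  simp only [Finset.sum_apply _ (powersetCard r I), Pi.smul_apply, sum_pi_single_apply,
    ← sum_filter, sum_const]
  split_ifs with ha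
  · have hsub : ∀ S : Finset ι, a ∈ S ↔ {a} ⊆ S := fun S => singleton_subset_iff.symm
    simp_rw [hsub, card_filter_powersetCard_subset {a} I r (singleton_subset_iff.2 ha)
      (by simpa using Nat.one_le_iff_ne_zero.2 hr), card_singleton]
  · rw [filter_false_of_mem fun S hS haS => ha ((mem_powersetCard.1 hS).1 haS)]
    simp

end

lemma Phi_apply (n : ℕ) (x : Fin n → ℝ) (U : {S : Finset (Fin n) // S.card = 2}) :
    Phi n x U = ∑ i ∈ U.1, x i := by
  simp [Phi]

lemma Phi_sum_pi_single_one_apply (n : ℕ) (J : Finset (Fin n))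
    (U : {S : Finset (Fin n) // S.card = 2}) :
    Phi n (∑ i ∈ J, Pi.single i 1) U = #(J ∩ U.1) := by
  simp [Phi_apply, inter_comm]

def pairsWithin (n : ℕ) (J : Finset (Fin n)) : {S : Finset (Fin n) // S.card = 2} → ℝ :=
  fun U => if U.1 ⊆ J then 1 else 0

lemma v_eq_Phi_sub_pairsWithin (n : ℕ) (J : Finset (Fin n)) :
    v n J = Phi n (∑ i ∈ J, Pi.single i 1) - (2 : ℝ) • pairsWithin n J := by
  ext ⟨U, hU⟩
  have hle : #(J ∩ U) ≤ 2 := hU ▸ card_le_card inter_subset_right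
  have htwo : #(J ∩ U) = 2 ↔ U ⊆ J := by
    rw [← inter_eq_right, ← hU]
    exact ⟨fun h => eq_of_subset_of_card_le inter_subset_right h.ge, fun h => by rw [h]⟩
  simp only [v, pairsWithin, Pi.sub_apply, Pi.smul_apply, Phi_sum_pi_single_one_apply, ← htwo]
  interval_cases #(J ∩ U) <;> norm_num

lemma sum_pairsWithin_powersetCard_two (n : ℕ) (I : Finset (Fin n)) :
    ∑ S ∈ powersetCard 2 I, pairsWithin n S = pairsWithin n I := by
  ext ⟨U, hU⟩
  have hpair : ∀ S ∈ powersetCard 2 I, pairsWithin n S ⟨U, hU⟩ = if S = U then 1 else 0 := by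
    intro S hS
    simp only [pairsWithin, subset_iff_eq_of_card_le ((mem_powersetCard.1 hS).2.trans hU.symm).le,
      eq_comm]
  rw [Finset.sum_apply, sum_congr rfl hpair, sum_ite_eq']
  simp [pairsWithin, hU]

lemma sum_v_powersetCard_two (n : ℕ) (I : Finset (Fin n)) :
    ∑ S ∈ powersetCard 2 I, v n S
      = ((#I : ℝ) - 1) • Phi n (∑ i ∈ I, Pi.single i 1) - (2 : ℝ) • pairsWithin n I := by
  simp_rw [v_eq_Phi_sub_pairsWithin]
  rw [sum_sub_distrib, ← map_sum, ← smul_sum, sum_powersetCard_sum_pi_single two_ne_zero, sum_pairsWithin_powersetCard_two,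
    Nat.choose_one_right, map_nsmul]
  congr 1
  -- `#I - 1` is truncated subtraction in `ℕ`
  obtain rfl | hI := I.eq_empty_or_nonempty
  · simp
  · rw [← Nat.cast_smul_eq_nsmul ℝ, Nat.cast_sub hI.card_pos, Nat.cast_one]

theorem vI_representation_general (n : ℕ) (I : Finset (Fin n)) :
    v n I = (∑ S ∈ Finset.powersetCard 2 I, v n S)
        - ((I.card : ℝ) - 2) • Phi n (∑ i ∈ I, Pi.single i (1 : ℝ)) ∧
      Submodule.Quotient.mk (p := LinearMap.range (Phi n)) (v n I)
        = ∑ S ∈ Finset.powersetCard 2 I,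
            Submodule.Quotient.mk (p := LinearMap.range (Phi n)) (v n S) := by
  have hv : v n I = (∑ S ∈ Finset.powersetCard 2 I, v n S)
      - ((I.card : ℝ) - 2) • Phi n (∑ i ∈ I, Pi.single i (1 : ℝ)) := by
    rw [sum_v_powersetCard_two, v_eq_Phi_sub_pairsWithin]
    module
  refine ⟨hv, ?_⟩
  rw [hv, Submodule.Quotient.mk_sub,
    (Submodule.Quotient.mk_eq_zero _).2 (Submodule.smul_mem _ _ (LinearMap.mem_range_self _ _)),
    sub_zero]
  exact map_sum (LinearMap.range (Phi n)).mkQ _ _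

theorem vI_representation (n : ℕ) (hn : 4 ≤ n) (I : Finset (Fin n)) (k : Fin n)
    (hk : k ∉ I) (h1 : 1 < I.card) (h2 : I.card < n - 1) :
    v n I = (∑ S ∈ Finset.powersetCard 2 I, v n S)
        - ((I.card : ℝ) - 2) • Phi n (∑ i ∈ I, Pi.single i (1 : ℝ)) ∧
      Submodule.Quotient.mk (p := LinearMap.range (Phi n)) (v n I)
        = ∑ S ∈ Finset.powersetCard 2 I,
            Submodule.Quotient.mk (p := LinearMap.range (Phi n)) (v n S) :=
  vI_representation_general n I
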